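/- Let n ≥ 1, s ∈ ℝ and σ > s. Then there exist θ ∈ (0,1) and C > 0 such that for every f ∈ L²(ℝⁿ) with ∑_{k ∈ ℤⁿ} (1+|k|)^σ ‖𝓕f‖_{L²(Q_k)} < ∞, one has ∑_{k ∈ ℤⁿ} (1+|k|)^s ‖𝓕f‖_{L²(Q_k)} ≤ C ( ∑_{k ∈ ℤⁿ} (1+|k|)^σ ‖𝓕f‖_{L²(Q_k)} )^{1-θ} ‖f‖_{L²(ℝⁿ)}^θ. -/

import Mathlib

/-!
Write `a_k = ‖g‖_{L²(Q_k)}` and pick `t ≤ -2n` with `t < s`, so that `s = (1 - θ) σ + θ t` for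
some `θ ∈ (0, 1)`. Then `⟨k⟩^s a_k = (⟨k⟩^σ a_k)^(1-θ) (⟨k⟩^t a_k)^θ`, and Hölder's inequality
with exponents `1/(1-θ)` and `1/θ` bounds the sum by `(∑ ⟨k⟩^σ a_k)^(1-θ) (∑ ⟨k⟩^t a_k)^θ`.
Since `a_k ≤ ‖g‖_{L²}` and `∑ ⟨k⟩^t < ∞` (compare with `∏_j (1 + |k_j|)^(-2)`), the last factor
is at most `(∑ ⟨k⟩^t)^θ ‖g‖_{L²}^θ`.
-/

open MeasureTheory

noncomputable section

/-- The unit cube `Q_k = {ξ : -1/2 ≤ ξ_j - k_j < 1/2}` around `k ∈ ℤⁿ`. -/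
def Qcube {n : ℕ} (k : Fin n → ℤ) : Set (Fin n → ℝ) :=
  {ξ | ∀ j, (k j : ℝ) - 1 / 2 ≤ ξ j ∧ ξ j < (k j : ℝ) + 1 / 2}

/-- `⟨k⟩ = 1 + |k|` with the Euclidean norm of `k ∈ ℤⁿ`. -/
def jpn {n : ℕ} (k : Fin n → ℤ) : ℝ := 1 + Real.sqrt (∑ j, ((k j : ℝ)) ^ 2)

lemma one_le_jpn {n : ℕ} (k : Fin n → ℤ) : 1 ≤ jpn k :=
  le_add_of_nonneg_right (Real.sqrt_nonneg _)

lemma jpn_pos {n : ℕ} (k : Fin n → ℤ) : 0 < jpn k :=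
  zero_lt_one.trans_le (one_le_jpn k)

lemma one_add_abs_le_jpn {n : ℕ} (k : Fin n → ℤ) (j : Fin n) : 1 + |(k j : ℝ)| ≤ jpn k := by
  rw [jpn, ← Real.sqrt_sq_eq_abs]
  gcongr
  exact Finset.single_le_sum (f := fun i => (k i : ℝ) ^ 2) (fun i _ => sq_nonneg _)
    (Finset.mem_univ j)

lemma summable_one_add_abs_int_rpow_neg {r : ℝ} (hr : 1 < r) :
    Summable fun m : ℤ => (1 + |(m : ℝ)|) ^ (-r) := by
  refine (Real.summable_abs_int_rpow hr).of_norm_bounded_eventually ?_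
  filter_upwards [(Set.finite_singleton (0 : ℤ)).compl_mem_cofinite] with m hm
  have hm : 0 < |(m : ℝ)| := by simpa using hm
  rw [Real.norm_of_nonneg (by positivity)]
  exact Real.rpow_le_rpow_of_nonpos hm (by linarith) (by linarith)

lemma summable_fin_pi_prod {α : Type*} {f : α → ℝ} (hf₀ : ∀ a, 0 ≤ f a) (hf : Summable f) :
    ∀ n : ℕ, Summable fun x : Fin n → α => ∏ j, f (x j)
  | 0 => .of_finite
  | n + 1 => by
    rw [← (Fin.consEquiv fun _ => α).summable_iff]
    refine (hf.mul_of_nonneg (summable_fin_pi_prod hf₀ hf n) hf₀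
      fun x => Finset.prod_nonneg fun j _ => hf₀ _).congr fun p => ?_
    simp [Fin.prod_univ_succ, Fin.consEquiv]

lemma summable_jpn_rpow {n : ℕ} {t : ℝ} (ht : t ≤ -(2 * n)) :
    Summable fun k : Fin n → ℤ => jpn k ^ t := by
  refine .of_nonneg_of_le (fun k => Real.rpow_nonneg (jpn_pos k).le t) (fun k => ?_)
    (summable_fin_pi_prod (fun m => by positivity)
      (summable_one_add_abs_int_rpow_neg one_lt_two) n)
  calc jpn k ^ t ≤ jpn k ^ (-(2 * n : ℝ)) := Real.rpow_le_rpow_of_exponent_le (one_le_jpn k) ht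
    _ = ∏ _j : Fin n, jpn k ^ (-2 : ℝ) := by
      rw [Finset.prod_const, Finset.card_univ, Fintype.card_fin,
        ← Real.rpow_mul_natCast (jpn_pos k).le]
      ring_nf
    _ ≤ ∏ j, (1 + |(k j : ℝ)|) ^ (-2 : ℝ) :=
      Finset.prod_le_prod (fun j _ => Real.rpow_nonneg (jpn_pos k).le _) fun j _ =>
        Real.rpow_le_rpow_of_nonpos (by positivity) (one_add_abs_le_jpn k j) (by norm_num)

lemma tsum_rpow_one_sub_mul_rpow_le {ι : Type*} {u v : ι → ℝ} (hu : ∀ i, 0 ≤ u i)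
    (hv : ∀ i, 0 ≤ v i) (hu_sum : Summable u) (hv_sum : Summable v) {θ : ℝ}
    (hθ : θ ∈ Set.Ioo (0 : ℝ) 1) :
    ∑' i, u i ^ (1 - θ) * v i ^ θ ≤ (∑' i, u i) ^ (1 - θ) * (∑' i, v i) ^ θ := by
  have hθ₀ : θ ≠ 0 := hθ.1.ne'
  have hθ₁ : 1 - θ ≠ 0 := (sub_pos.2 hθ.2).ne'
  have := Real.inner_le_Lp_mul_Lq_tsum_of_nonneg (.one_sub_inv_inv hθ.1 hθ.2)
    (f := fun i => u i ^ (1 - θ)) (g := fun i => v i ^ θ)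
    (fun i => Real.rpow_nonneg (hu i) (1 - θ)) (fun i => Real.rpow_nonneg (hv i) θ)
    (by simpa only [Real.rpow_rpow_inv (hu _) hθ₁] using hu_sum)
    (by simpa only [Real.rpow_rpow_inv (hv _) hθ₀] using hv_sum)
  simpa only [Real.rpow_rpow_inv (hu _) hθ₁, Real.rpow_rpow_inv (hv _) hθ₀, one_div, inv_inv]
    using this

lemma tsum_rpow_mul_le_interpolation {ι : Type*} {w a : ι → ℝ} {L θ t s σ : ℝ}
    (hw : ∀ i, 0 < w i) (ha : ∀ i, 0 ≤ a i) (haL : ∀ i, a i ≤ L) (hL : 0 ≤ L)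
    (hθ : θ ∈ Set.Ioo (0 : ℝ) 1) (hs : s = (1 - θ) * σ + θ * t)
    (hwt : Summable fun i => w i ^ t) (hwσ : Summable fun i => w i ^ σ * a i) :
    ∑' i, w i ^ s * a i ≤
      (∑' i, w i ^ t) ^ θ * (∑' i, w i ^ σ * a i) ^ (1 - θ) * L ^ θ := by
  have hwa : ∀ (r : ℝ) i, 0 ≤ w i ^ r * a i := fun r i =>
    mul_nonneg (Real.rpow_nonneg (hw i).le r) (ha i)
  have hwtL : ∀ i, w i ^ t * a i ≤ w i ^ t * L := fun i =>
    mul_le_mul_of_nonneg_left (haL i) (Real.rpow_nonneg (hw i).le t)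
  have hwta : Summable fun i => w i ^ t * a i :=
    .of_nonneg_of_le (hwa t) hwtL (hwt.mul_right L)
  have hsplit : ∀ i, w i ^ s * a i = (w i ^ σ * a i) ^ (1 - θ) * (w i ^ t * a i) ^ θ := by
    intro i
    have hw_split : (w i ^ σ) ^ (1 - θ) * (w i ^ t) ^ θ = w i ^ s := by
      rw [← Real.rpow_mul (hw i).le, ← Real.rpow_mul (hw i).le, ← Real.rpow_add (hw i), hs]
      ring_nf
    have ha_split : a i ^ (1 - θ) * a i ^ θ = a i := by
      rw [← Real.rpow_add' (ha i) (by simp), sub_add_cancel, Real.rpow_one]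
    rw [Real.mul_rpow (Real.rpow_nonneg (hw i).le σ) (ha i),
      Real.mul_rpow (Real.rpow_nonneg (hw i).le t) (ha i), mul_mul_mul_comm, hw_split, ha_split]
  have hbound : ∑' i, w i ^ t * a i ≤ (∑' i, w i ^ t) * L := by
    rw [← tsum_mul_right]
    exact hwta.tsum_le_tsum hwtL (hwt.mul_right L)
  calc ∑' i, w i ^ s * a i
      = ∑' i, (w i ^ σ * a i) ^ (1 - θ) * (w i ^ t * a i) ^ θ := tsum_congr hsplit
    _ ≤ (∑' i, w i ^ σ * a i) ^ (1 - θ) * (∑' i, w i ^ t * a i) ^ θ :=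
      tsum_rpow_one_sub_mul_rpow_le (hwa σ) (hwa t) hwσ hwta hθ
    _ ≤ (∑' i, w i ^ σ * a i) ^ (1 - θ) * ((∑' i, w i ^ t) * L) ^ θ :=
      mul_le_mul_of_nonneg_left (Real.rpow_le_rpow (tsum_nonneg (hwa t)) hbound hθ.1.le)
        (Real.rpow_nonneg (tsum_nonneg (hwa σ)) _)
    _ = _ := by
      rw [Real.mul_rpow (tsum_nonneg fun i => Real.rpow_nonneg (hw i).le t) hL]
      ring

lemma setIntegral_norm_sq_rpow_le {α E : Type*} [MeasurableSpace α] {μ : Measure α}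
    [NormedAddCommGroup E] {g : α → E} (hg : MemLp g 2 μ) (A : Set α) {p : ℝ} (hp : 0 ≤ p) :
    (∫ x in A, ‖g x‖ ^ 2 ∂μ) ^ p ≤ (∫ x, ‖g x‖ ^ 2 ∂μ) ^ p :=
  Real.rpow_le_rpow (integral_nonneg fun _ => by positivity)
    (setIntegral_le_integral (hg.integrable_norm_pow two_ne_zero)
      (.of_forall fun _ => by positivity)) hp

/-- Stated for `g = 𝓕f`: both sides only involve `𝓕f`, and `‖f‖_{L²} = ‖𝓕f‖_{L²}`. -/
theorem stmt_18_general (n : ℕ) (s σ : ℝ) (hsσ : s < σ) :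
    ∃ θ : ℝ, θ ∈ Set.Ioo (0 : ℝ) 1 ∧
      ∃ C : ℝ, 0 < C ∧
        ∀ g : (Fin n → ℝ) → ℂ,
          MemLp g 2 volume →
          Summable (fun k : Fin n → ℤ =>
            jpn k ^ σ * (∫ ξ in Qcube k, ‖g ξ‖ ^ 2) ^ ((1 : ℝ) / 2)) →
          (∑' k : Fin n → ℤ, jpn k ^ s * (∫ ξ in Qcube k, ‖g ξ‖ ^ 2) ^ ((1 : ℝ) / 2))
            ≤ C * (∑' k : Fin n → ℤ,
                  jpn k ^ σ * (∫ ξ in Qcube k, ‖g ξ‖ ^ 2) ^ ((1 : ℝ) / 2)) ^ (1 - θ) *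
                ((∫ ξ : Fin n → ℝ, ‖g ξ‖ ^ 2) ^ ((1 : ℝ) / 2)) ^ θ := by
  set t : ℝ := min (s - 1) (-(2 * n))
  have hts : t < s := (min_le_left _ _).trans_lt (by linarith)
  set θ := (σ - s) / (σ - t)
  have hθ : θ ∈ Set.Ioo (0 : ℝ) 1 :=
    ⟨div_pos (by linarith) (by linarith), (div_lt_one (by linarith)).2 (by linarith)⟩
  have hs : s = (1 - θ) * σ + θ * t := by
    have : θ * (σ - t) = σ - s := div_mul_cancel₀ _ (by linarith)
    linarith
  have hwt : Summable fun k : Fin n → ℤ => jpn k ^ t := summable_jpn_rpow (min_le_right _ _)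
  have hC : 0 < ∑' k : Fin n → ℤ, jpn k ^ t :=
    hwt.tsum_pos (fun k => Real.rpow_nonneg (jpn_pos k).le t) 0 (Real.rpow_pos_of_pos (jpn_pos 0) t)
  refine ⟨θ, hθ, _, Real.rpow_pos_of_pos hC θ, fun g hg hσ => ?_⟩
  exact tsum_rpow_mul_le_interpolation jpn_pos (fun k => by positivity)
    (fun k => setIntegral_norm_sq_rpow_le hg _ (by norm_num)) (by positivity) hθ hs hwt hσ

/-- interpolation inequality between weighted `M^s_{2,1}` modulation
norms and the `L²` norm.  Since the Fourier–Plancherel transform `𝓕` is unitary on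
`L²(ℝⁿ)`, we state it for `g = 𝓕f`: both sides only involve `𝓕f` (in particular
`‖f‖_{L²} = ‖𝓕f‖_{L²} = ‖g‖_{L²}`). -/
theorem stmt_18 (n : ℕ) (hn : 1 ≤ n) (s σ : ℝ) (hsσ : s < σ) :
    ∃ θ : ℝ, θ ∈ Set.Ioo (0 : ℝ) 1 ∧
      ∃ C : ℝ, 0 < C ∧
        ∀ g : (Fin n → ℝ) → ℂ,
          MemLp g 2 volume →
          Summable (fun k : Fin n → ℤ =>
            jpn k ^ σ * (∫ ξ in Qcube k, ‖g ξ‖ ^ 2) ^ ((1 : ℝ) / 2)) →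
          (∑' k : Fin n → ℤ, jpn k ^ s * (∫ ξ in Qcube k, ‖g ξ‖ ^ 2) ^ ((1 : ℝ) / 2))
            ≤ C * (∑' k : Fin n → ℤ,
                  jpn k ^ σ * (∫ ξ in Qcube k, ‖g ξ‖ ^ 2) ^ ((1 : ℝ) / 2)) ^ (1 - θ) *
                ((∫ ξ : Fin n → ℝ, ‖g ξ‖ ^ 2) ^ ((1 : ℝ) / 2)) ^ θ :=
  stmt_18_general n s σ hsσ
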